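/- arXiv:0907.4313 — 5 statements merged into one kernel-verified Lean document; each statement's English description precedes it below -/
import Mathlib

section
/- Let γ be a positive trace-class operator on the symmetric k-fold tensor product of L²(ℝ^d) with trace 1, and let φ ∈ L²(ℝ^d) with ‖φ‖ = 1. Define E^(j) := 1 − ⟨φ^⊗j, γ^(j) φ^⊗j⟩ where γ^(j) denotes the reduced j-particle density matrix obtained from γ by partial trace over the last k−j coordinates. Then E^(k) ≤ k · E^(1). -/
open Finset ComplexOrder

set_option maxHeartbeats 1000000

open Matrix


namespace Stmt0Aux

variable {d k : ℕ}

/-- Tensor product kernel: `P = |φ⟩⟨φ|` on coordinates in `S`, identity elsewhere. -/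
def tpM (φ : Fin d → ℂ) (S : Finset (Fin k)) :
    Matrix (Fin k → Fin d) (Fin k → Fin d) ℂ :=
  Matrix.of fun x y => ∏ i, if i ∈ S then (starRingEnd ℂ) (φ (x i)) * φ (y i)
    else if x i = y i then 1 else 0

lemma tpM_apply (φ : Fin d → ℂ) (S : Finset (Fin k)) (x y : Fin k → Fin d) :
    tpM φ S x y = ∏ i, if i ∈ S then (starRingEnd ℂ) (φ (x i)) * φ (y i)
      else if x i = y i then 1 else 0 := rfl

lemma tpM_empty (φ : Fin d → ℂ) : tpM φ (∅ : Finset (Fin k)) = 1 := by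
  ext x y
  rw [tpM_apply, Matrix.one_apply]
  by_cases h : x = y
  · subst h; simp
  · rw [if_neg h]
    obtain ⟨i, hi⟩ := Function.ne_iff.mp h
    exact Finset.prod_eq_zero (Finset.mem_univ i) (by simp [hi])

lemma tpM_herm (φ : Fin d → ℂ) (S : Finset (Fin k)) : (tpM φ S)ᴴ = tpM φ S := by
  ext x y
  rw [Matrix.conjTranspose_apply, tpM_apply, tpM_apply, star_prod]
  refine Finset.prod_congr rfl fun i _ => ?_
  by_cases h : i ∈ S
  · simp [h, mul_comm]
  · by_cases hxy : x i = y i <;> simp [h, hxy, eq_comm]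

lemma tpM_mul (φ : Fin d → ℂ) (hφ1 : ∑ a, (starRingEnd ℂ) (φ a) * φ a = 1)
    (S T : Finset (Fin k)) : tpM φ S * tpM φ T = tpM φ (S ∪ T) := by
  ext x y
  rw [Matrix.mul_apply, tpM_apply]
  set G : Fin k → Fin d → ℂ := fun i a =>
    (if i ∈ S then (starRingEnd ℂ) (φ (x i)) * φ a else if x i = a then 1 else 0) *
    (if i ∈ T then (starRingEnd ℂ) (φ a) * φ (y i) else if a = y i then 1 else 0) with hG
  have key : ∀ z : Fin k → Fin d, tpM φ S x z * tpM φ T z y = ∏ i, G i (z i) := by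
    intro z
    rw [tpM_apply, tpM_apply, Finset.prod_mul_distrib]
  calc ∑ z : Fin k → Fin d, tpM φ S x z * tpM φ T z y
      = ∑ z : Fin k → Fin d, ∏ i, G i (z i) := Finset.sum_congr rfl fun z _ => key z
    _ = ∏ i, ∑ a, G i a := (Fintype.prod_sum G).symm
    _ = _ := by
        refine Finset.prod_congr rfl fun i _ => ?_
        by_cases hS : i ∈ S <;> by_cases hT : i ∈ T
        · rw [if_pos (Finset.mem_union_left _ hS)]
          have hmul : ∀ a : Fin d,
              ((starRingEnd ℂ) (φ (x i)) * φ a) * ((starRingEnd ℂ) (φ a) * φ (y i))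
              = ((starRingEnd ℂ) (φ a) * φ a) * ((starRingEnd ℂ) (φ (x i)) * φ (y i)) := by
            intro a; ring
          simp only [hG, hS, hT, if_true, hmul, ← Finset.sum_mul, hφ1, one_mul]
        · rw [if_pos (Finset.mem_union_left _ hS)]
          simp [hG, hS, hT, mul_ite, mul_zero, mul_one]
        · rw [if_pos (Finset.mem_union_right _ hT)]
          simp [hG, hS, hT, ite_mul, zero_mul, one_mul]
        · rw [if_neg (by simp [hS, hT])]
          simp only [hG, hS, hT, if_false]
          by_cases hxy : x i = y i
          · rw [if_pos hxy]
            rw [Finset.sum_eq_single (y i)] <;> simp_all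
          · rw [if_neg hxy]
            refine Finset.sum_eq_zero fun a _ => ?_
            by_cases h1 : x i = a
            · subst h1; simp [hxy]
            · simp [h1]

/-- The pairing `∑ₓᵧ M x y γ x y = Tr[M γᵀ]` used to express reduced expectations. -/
noncomputable def pairQ (γ M : Matrix (Fin k → Fin d) (Fin k → Fin d) ℂ) : ℂ :=
  ∑ x, ∑ y, M x y * γ x y

lemma pairQ_eq_trace (γ M : Matrix (Fin k → Fin d) (Fin k → Fin d) ℂ) :
    pairQ γ M = (M * γᵀ).trace := by
  rw [Matrix.trace]
  simp only [Matrix.diag_apply, Matrix.mul_apply, Matrix.transpose_apply]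
  exact (Finset.sum_congr rfl fun x _ => rfl)

lemma trace_re_nonneg {A : Matrix (Fin k → Fin d) (Fin k → Fin d) ℂ}
    (hA : A.PosSemidef) : 0 ≤ A.trace.re := by
  have hdiag : ∀ i, 0 ≤ (A i i).re := by
    intro i
    have h := hA.re_dotProduct_nonneg (Pi.single i 1)
    simpa [dotProduct, Matrix.mulVec, Pi.single_apply, apply_ite] using h
  have h2 : A.trace.re = ∑ i, (A i i).re := by
    rw [Matrix.trace, Complex.re_sum]; rfl
  rw [h2]
  exact Finset.sum_nonneg fun i _ => hdiag i

lemma pairQ_sq_nonneg (γ N : Matrix (Fin k → Fin d) (Fin k → Fin d) ℂ)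
    (hpos : γ.PosSemidef) : 0 ≤ (pairQ γ (Nᴴ * N)).re := by
  rw [pairQ_eq_trace, ← Matrix.trace_mul_cycle N γᵀ Nᴴ]
  exact trace_re_nonneg ((hpos.transpose).mul_mul_conjTranspose_same N)

lemma pairQ_perm (γ : Matrix (Fin k → Fin d) (Fin k → Fin d) ℂ)
    (hsym : ∀ σ : Equiv.Perm (Fin k), ∀ x y : Fin k → Fin d, γ (x ∘ σ) (y ∘ σ) = γ x y)
    (φ : Fin d → ℂ) (σ : Equiv.Perm (Fin k)) (S : Finset (Fin k)) :
    pairQ γ (tpM φ (S.image σ)) = pairQ γ (tpM φ S) := by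
  have hmem : ∀ i, σ i ∈ S.image σ ↔ i ∈ S := by
    intro i
    simp [Finset.mem_image, σ.injective.eq_iff]
  have hmain : ∀ x y : Fin k → Fin d,
      tpM φ S (x ∘ σ) (y ∘ σ) = tpM φ (S.image σ) x y := by
    intro x y
    rw [tpM_apply, tpM_apply,
      ← Equiv.prod_comp σ (fun j => if j ∈ S.image σ then (starRingEnd ℂ) (φ (x j)) * φ (y j)
        else if x j = y j then 1 else 0)]
    refine Finset.prod_congr rfl fun i _ => ?_
    simp only [Function.comp_apply, hmem i]
  set e : (Fin k → Fin d) ≃ (Fin k → Fin d) := Equiv.arrowCongr σ.symm (Equiv.refl (Fin d))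
    with he'
  have he : ∀ v : Fin k → Fin d, e v = v ∘ σ := fun v => rfl
  set f : (Fin k → Fin d) → (Fin k → Fin d) → ℂ := fun x y => tpM φ S x y * γ x y with hf
  have hA : ∀ x y, tpM φ (S.image σ) x y * γ x y = f (e x) (e y) := by
    intro x y
    rw [hf, he, he]
    show _ = tpM φ S (x ∘ σ) (y ∘ σ) * γ (x ∘ σ) (y ∘ σ)
    rw [hsym σ, ← hmain x y]
  calc ∑ x, ∑ y, tpM φ (S.image σ) x y * γ x y
      = ∑ x, ∑ y, f (e x) (e y) :=
        Finset.sum_congr rfl fun x _ => Finset.sum_congr rfl fun y _ => hA x y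
    _ = ∑ x, ∑ y, f x (e y) := Equiv.sum_comp e (fun x => ∑ y, f x (e y))
    _ = ∑ x, ∑ y, f x y := Finset.sum_congr rfl fun x _ => Equiv.sum_comp e (f x)

lemma pairQ_sub (γ M N : Matrix (Fin k → Fin d) (Fin k → Fin d) ℂ) :
    pairQ γ (M - N) = pairQ γ M - pairQ γ N := by
  simp [pairQ, Matrix.sub_apply, sub_mul, Finset.sum_sub_distrib]

lemma pairQ_add (γ M N : Matrix (Fin k → Fin d) (Fin k → Fin d) ℂ) :
    pairQ γ (M + N) = pairQ γ M + pairQ γ N := by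
  simp [pairQ, Matrix.add_apply, add_mul, Finset.sum_add_distrib]

lemma pairQ_one (γ : Matrix (Fin k → Fin d) (Fin k → Fin d) ℂ) :
    pairQ γ 1 = γ.trace := by
  rw [pairQ_eq_trace, Matrix.one_mul, Matrix.trace_transpose]

end Stmt0Aux

/-- For a symmetric `k`-particle density matrix `γ` (on the `k`-fold tensor power of a
one-particle Hilbert space, modelled as `ℂ^{d^k}` with kernel indices `Fin k → Fin d`) and a
normalized one-particle state `φ`, the indicators `E⁽ʲ⁾ = 1 − ⟨φ^⊗j, γ⁽ʲ⁾ φ^⊗j⟩` (where `γ⁽ʲ⁾`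
is the reduced `j`-particle density matrix, obtained by partial trace over the last `k − j`
coordinates) satisfy `E⁽ᵏ⁾ ≤ k E⁽¹⁾`. -/
theorem stmt_0 (d k : ℕ) (hk : 1 ≤ k)
    (γ : Matrix (Fin k → Fin d) (Fin k → Fin d) ℂ)
    (hpos : γ.PosSemidef) (htr : γ.trace = 1)
    (hsym : ∀ σ : Equiv.Perm (Fin k), ∀ x y : Fin k → Fin d, γ (x ∘ σ) (y ∘ σ) = γ x y)
    (φ : Fin d → ℂ) (hφ : ∑ i, Complex.normSq (φ i) = 1) :
    -- `ip j = ⟨φ^⊗j, γ⁽ʲ⁾ φ^⊗j⟩`, the partial trace over coordinates `j+1, …, k` being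
    -- encoded by the constraint that `x` and `y` agree on those coordinates.
    let ip : ℕ → ℂ := fun j =>
      ∑ x : Fin k → Fin d, ∑ y : Fin k → Fin d,
        if ∀ i : Fin k, j ≤ (i : ℕ) → x i = y i then
          (∏ i : Fin k, if (i : ℕ) < j then (starRingEnd ℂ) (φ (x i)) * φ (y i) else 1) * γ x y
        else 0
    1 - (ip k).re ≤ (k : ℝ) * (1 - (ip 1).re) := by
  intro ip
  classical
  have hdef : ip = fun j =>
      ∑ x : Fin k → Fin d, ∑ y : Fin k → Fin d,
        if ∀ i : Fin k, j ≤ (i : ℕ) → x i = y i then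
          (∏ i : Fin k, if (i : ℕ) < j then (starRingEnd ℂ) (φ (x i)) * φ (y i) else 1) * γ x y
        else 0 := rfl
  have hφ1 : ∑ a, (starRingEnd ℂ) (φ a) * φ a = 1 := by
    have h' : ∀ a, (starRingEnd ℂ) (φ a) * φ a = (Complex.normSq (φ a) : ℂ) := by
      intro a; rw [mul_comm, Complex.mul_conj]
    simp only [h']
    rw [← Complex.ofReal_sum, hφ, Complex.ofReal_one]
  -- express `ip j` via the pairing with the tensor-product kernel
  have hip : ∀ j : ℕ, ip j
      = Stmt0Aux.pairQ γ (Stmt0Aux.tpM φ (univ.filter fun i : Fin k => (i : ℕ) < j)) := by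
    intro j
    rw [hdef]
    unfold Stmt0Aux.pairQ
    refine Finset.sum_congr rfl fun x _ => Finset.sum_congr rfl fun y _ => ?_
    rw [Stmt0Aux.tpM_apply]
    by_cases h : ∀ i : Fin k, j ≤ (i : ℕ) → x i = y i
    · rw [if_pos h]
      congr 1
      refine Finset.prod_congr rfl fun i _ => ?_
      by_cases hi : (i : ℕ) < j
      · simp [hi]
      · have hxy := h i (le_of_not_gt hi)
        simp [hi, hxy]
    · rw [if_neg h]
      push_neg at h
      obtain ⟨i, hji, hxy⟩ := h
      rw [Finset.prod_eq_zero (Finset.mem_univ i) (by simp [Nat.not_lt.mpr hji, hxy]), zero_mul]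
  have h0 : ip 0 = 1 := by
    rw [hip 0]
    have hempty : (univ.filter fun i : Fin k => (i : ℕ) < 0) = (∅ : Finset (Fin k)) := by simp
    rw [hempty, Stmt0Aux.tpM_empty, Stmt0Aux.pairQ_eq_trace, Matrix.one_mul,
      Matrix.trace_transpose, htr]
  have hone : ∀ jf : Fin k, ip 1 = Stmt0Aux.pairQ γ (Stmt0Aux.tpM φ ({jf} : Finset (Fin k))) := by
    intro jf
    rw [hip 1]
    have h01 : (univ.filter fun i : Fin k => (i : ℕ) < 1) = {(⟨0, hk⟩ : Fin k)} := by
      ext i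
      simp [Nat.lt_one_iff, Fin.ext_iff]
    have himg : ({jf} : Finset (Fin k))
        = ({(⟨0, hk⟩ : Fin k)} : Finset (Fin k)).image (Equiv.swap (⟨0, hk⟩ : Fin k) jf) := by
      rw [Finset.image_singleton, Equiv.swap_apply_left]
    rw [h01, himg, Stmt0Aux.pairQ_perm γ hsym φ _ _]
  -- the one-step inequality
  have hstep : ∀ j : ℕ, j < k → (ip j).re - (ip (j+1)).re ≤ 1 - (ip 1).re := by
    intro j hj
    set S : Finset (Fin k) := univ.filter fun i : Fin k => (i : ℕ) < j with hS
    have hSj : S ∪ {(⟨j, hj⟩ : Fin k)} = univ.filter fun i : Fin k => (i : ℕ) < j + 1 := by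
      ext i
      simp only [hS, Finset.mem_union, Finset.mem_filter, Finset.mem_univ, true_and,
        Finset.mem_singleton, Fin.ext_iff]
      omega
    set a := Stmt0Aux.tpM φ S with ha'
    set b := Stmt0Aux.tpM φ ({(⟨j, hj⟩ : Fin k)} : Finset (Fin k)) with hb'
    have hab : a * b = Stmt0Aux.tpM φ (S ∪ {(⟨j, hj⟩ : Fin k)}) := Stmt0Aux.tpM_mul φ hφ1 _ _
    have hba : b * a = Stmt0Aux.tpM φ (S ∪ {(⟨j, hj⟩ : Fin k)}) := by
      rw [hb', ha', Stmt0Aux.tpM_mul φ hφ1, Finset.union_comm]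
    have haa : a * a = a := by rw [ha', Stmt0Aux.tpM_mul φ hφ1, Finset.union_self]
    have hbb : b * b = b := by rw [hb', Stmt0Aux.tpM_mul φ hφ1, Finset.union_self]
    have h1 : (1 - a) * (1 - a) = 1 - a := by
      have : (1 - a) * (1 - a) = 1 - a - a + a * a := by noncomm_ring
      rw [this, haa]; abel
    have h2 : (1 - b) * (1 - b) = 1 - b := by
      have : (1 - b) * (1 - b) = 1 - b - b + b * b := by noncomm_ring
      rw [this, hbb]; abel
    have huv : (1 - a) * (1 - b) = 1 - a - b + a * b := by noncomm_ring
    have hvu : (1 - b) * (1 - a) = 1 - a - b + a * b := by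
      have : (1 - b) * (1 - a) = 1 - b - a + b * a := by noncomm_ring
      rw [this, hba, ← hab]; abel
    have hcomm : (1 - b) * (1 - a) = (1 - a) * (1 - b) := by rw [huv, hvu]
    have hNherm : ((1 - a) * (1 - b))ᴴ = (1 - b) * (1 - a) := by
      rw [Matrix.conjTranspose_mul, Matrix.conjTranspose_sub, Matrix.conjTranspose_sub,
        Matrix.conjTranspose_one, ha', hb', Stmt0Aux.tpM_herm, Stmt0Aux.tpM_herm]
    have hNN : ((1 - a) * (1 - b))ᴴ * ((1 - a) * (1 - b)) = 1 - a - b + a * b := by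
      rw [hNherm]
      calc (1 - b) * (1 - a) * ((1 - a) * (1 - b))
          = (1 - b) * ((1 - a) * (1 - a)) * (1 - b) := by noncomm_ring
        _ = (1 - b) * (1 - a) * (1 - b) := by rw [h1]
        _ = (1 - a) * (1 - b) * (1 - b) := by rw [hcomm]
        _ = (1 - a) * ((1 - b) * (1 - b)) := by rw [Matrix.mul_assoc]
        _ = (1 - a) * (1 - b) := by rw [h2]
        _ = 1 - a - b + a * b := huv
    have hkey := Stmt0Aux.pairQ_sq_nonneg γ ((1 - a) * (1 - b)) hpos
    rw [hNN] at hkey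
    have hexp : Stmt0Aux.pairQ γ (1 - a - b + a * b)
        = 1 - ip j - ip 1 + ip (j + 1) := by
      rw [Stmt0Aux.pairQ_add, Stmt0Aux.pairQ_sub, Stmt0Aux.pairQ_sub, Stmt0Aux.pairQ_one, htr,
        hab, hSj]
      rw [hip j, ← hS, hip (j+1), hone ⟨j, hj⟩]
    rw [hexp] at hkey
    simp only [Complex.add_re, Complex.sub_re, Complex.one_re] at hkey
    linarith
  have h0re : (ip 0).re = 1 := by rw [h0, Complex.one_re]
  calc 1 - (ip k).re = (ip 0).re - (ip k).re := by rw [h0re]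
    _ = ∑ j ∈ Finset.range k, ((ip j).re - (ip (j + 1)).re) :=
        (Finset.sum_range_sub' (fun j => (ip j).re) k).symm
    _ ≤ ∑ j ∈ Finset.range k, (1 - (ip 1).re) :=
        Finset.sum_le_sum fun j hj => hstep j (Finset.mem_range.mp hj)
    _ = (k : ℝ) * (1 - (ip 1).re) := by
        rw [Finset.sum_const, Finset.card_range, nsmul_eq_mul]
end

section
/- Let γ be a density matrix (positive trace-class operator with trace 1) on a Hilbert space H^(k) and p^(k) a rank-one orthogonal projector on H^(k). Then the trace-norm distance satisfies tr |p^(k) − γ| = 2 ‖p^(k) − γ‖, where ‖·‖ denotes the operator norm. -/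
/-!
Write `A = p - γ` and `μ` for its eigenvalues. Since `tr p = tr γ = 1`, the eigenvalues sum to
zero. Since `p - A = γ ≥ 0`, the quadratic form of `A` is nonpositive on `φ⊥`; a plane spanned by
two eigenvectors meets `φ⊥` nontrivially, so at most one eigenvalue is positive. Real numbers
summing to zero with at most one positive among them satisfy `∑ |μ i| = 2 max |μ i|`, and for a
Hermitian matrix `max |μ i|` is the operator norm.
-/

open ComplexOrder RCLike WithLp
open scoped InnerProductSpace

theorem sum_abs_eq_two_mul_norm_of_sum_eq_zero {ι : Type*} [Fintype ι] {μ : ι → ℝ}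
    (hsum : ∑ i, μ i = 0) (hpos : {i | 0 < μ i}.Subsingleton) :
    ∑ i, |μ i| = 2 * ‖μ‖ := by
  classical
  by_cases hex : ∃ i₀, 0 < μ i₀
  · obtain ⟨i₀, hi₀⟩ := hex
    have hle : ∀ j ∈ Finset.univ.erase i₀, μ j ≤ 0 := fun j hj ↦
      not_lt.mp fun hj' ↦ Finset.ne_of_mem_erase hj (hpos hj' hi₀)
    have hrest : ∑ j ∈ Finset.univ.erase i₀, -μ j = μ i₀ := by
      rw [Finset.sum_neg_distrib]
      linarith [Finset.add_sum_erase Finset.univ μ (Finset.mem_univ i₀)]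
    have hnorm : ‖μ‖ = μ i₀ := by
      refine le_antisymm ((pi_norm_le_iff_of_nonneg hi₀.le).mpr fun j ↦ ?_) ?_
      · rw [Real.norm_eq_abs]
        by_cases hj : j = i₀
        · rw [hj, abs_of_pos hi₀]
        · have hj' : j ∈ Finset.univ.erase i₀ := Finset.mem_erase.mpr ⟨hj, Finset.mem_univ j⟩
          rw [abs_of_nonpos (hle j hj'), ← hrest]
          exact Finset.single_le_sum (fun k hk ↦ neg_nonneg.mpr (hle k hk)) hj'
      · simpa [abs_of_pos hi₀] using norm_le_pi_norm μ i₀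
    calc ∑ i, |μ i| = |μ i₀| + ∑ j ∈ Finset.univ.erase i₀, -μ j := by
          rw [← Finset.add_sum_erase _ _ (Finset.mem_univ i₀),
            Finset.sum_congr rfl fun j hj ↦ abs_of_nonpos (hle j hj)]
      _ = 2 * ‖μ‖ := by rw [hrest, hnorm, abs_of_pos hi₀]; ring
  · push Not at hex
    have hzero : μ = 0 := funext fun i ↦
      (Finset.sum_eq_zero_iff_of_nonpos fun j _ ↦ hex j).mp hsum i (Finset.mem_univ i)
    simp [hzero]

namespace LinearMap

variable {𝕜 E : Type*} [RCLike 𝕜] [NormedAddCommGroup E] [InnerProductSpace 𝕜 E]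

theorem re_inner_map_add_of_eigenvectors (T : E →ₗ[𝕜] E) {v w : E} {μ ν : ℝ}
    (hv : T v = (μ : 𝕜) • v) (hw : T w = (ν : 𝕜) • w) (hvw : ⟪v, w⟫_𝕜 = 0) (a c : 𝕜) :
    re ⟪a • v + c • w, T (a • v + c • w)⟫_𝕜 =
      ‖a‖ ^ 2 * μ * ‖v‖ ^ 2 + ‖c‖ ^ 2 * ν * ‖w‖ ^ 2 := by
  have hwv : ⟪w, v⟫_𝕜 = 0 := inner_eq_zero_symm.mp hvw
  simp only [map_add, map_smul, hv, hw, inner_add_left, inner_add_right, inner_smul_left,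
    inner_smul_right, hvw, hwv, inner_self_eq_norm_sq_to_K]
  simp [← mul_assoc, norm_sq_eq_def]
  ring

theorem nonpos_of_eigenvectors_of_re_inner_nonpos {T : E →ₗ[𝕜] E} {φ : E}
    (hT : ∀ x, ⟪φ, x⟫_𝕜 = 0 → re ⟪x, T x⟫_𝕜 ≤ 0) {v w : E} {μ ν : ℝ}
    (hv : T v = (μ : 𝕜) • v) (hw : T w = (ν : 𝕜) • w) (hv0 : v ≠ 0) (hw0 : w ≠ 0)
    (hvw : ⟪v, w⟫_𝕜 = 0) (hμ : 0 < μ) : ν ≤ 0 := by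
  have hQ := T.re_inner_map_add_of_eigenvectors hv hw hvw
  have hvpos : 0 < ‖v‖ := norm_pos_iff.mpr hv0
  have hwpos : 0 < ‖w‖ := norm_pos_iff.mpr hw0
  by_contra! hν
  by_cases hφv : ⟪φ, v⟫_𝕜 = 0
  · have hQv := hQ 1 0
    norm_num at hQv
    nlinarith [hT v hφv, mul_pos hμ (pow_pos hvpos 2)]
  · -- `⟪φ, w⟫ v - ⟪φ, v⟫ w` is orthogonal to `φ` and has a nonzero `w`-component.
    have h := hT (⟪φ, w⟫_𝕜 • v + (-⟪φ, v⟫_𝕜) • w)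
      (by simp [inner_add_right, inner_smul_right, mul_comm])
    rw [hQ, norm_neg] at h
    have hφv' : 0 < ‖⟪φ, v⟫_𝕜‖ := norm_pos_iff.mpr hφv
    nlinarith [mul_pos (mul_pos (pow_pos hφv' 2) hν) (pow_pos hwpos 2),
      mul_nonneg (mul_nonneg (sq_nonneg ‖⟪φ, w⟫_𝕜‖) hμ.le) (sq_nonneg ‖v‖)]

end LinearMap

namespace Matrix

variable {𝕜 n : Type*} [RCLike 𝕜] [Fintype n] [DecidableEq n] {A : Matrix n n 𝕜}

theorem IsHermitian.toEuclideanLin_eigenvectorBasis (hA : A.IsHermitian) (i : n) :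
    toEuclideanLin A (hA.eigenvectorBasis i) = (hA.eigenvalues i : 𝕜) • hA.eigenvectorBasis i :=
  ofLp_injective 2 <| by
    simpa [← RCLike.real_smul_eq_coe_smul] using hA.mulVec_eigenvectorBasis i

theorem re_inner_toEuclideanLin_nonpos_of_posSemidef_vecMulVec_sub {φ : n → 𝕜}
    (hφA : (vecMulVec φ (star φ) - A).PosSemidef) (x : EuclideanSpace 𝕜 n)
    (hx : ⟪toLp 2 φ, x⟫_𝕜 = 0) : re ⟪x, toEuclideanLin A x⟫_𝕜 ≤ 0 := by
  have h := (isPositive_toEuclideanLin_iff.mpr hφA).re_inner_nonneg_right x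
  rw [map_sub, ← InnerProductSpace.symm_toEuclideanLin_rankOne (toLp 2 φ) (toLp 2 φ),
    LinearEquiv.apply_symm_apply] at h
  simpa [inner_sub_right, InnerProductSpace.rankOne_apply, hx] using h

theorem IsHermitian.subsingleton_setOf_eigenvalues_pos (hA : A.IsHermitian) {φ : n → 𝕜}
    (hφA : (vecMulVec φ (star φ) - A).PosSemidef) :
    {i | 0 < hA.eigenvalues i}.Subsingleton := by
  intro i hi j hj
  by_contra hij
  have hb := hA.eigenvectorBasis.orthonormal
  exact not_le.mpr hj <| LinearMap.nonpos_of_eigenvectors_of_re_inner_nonpos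
    (re_inner_toEuclideanLin_nonpos_of_posSemidef_vecMulVec_sub hφA)
    (hA.toEuclideanLin_eigenvectorBasis i) (hA.toEuclideanLin_eigenvectorBasis j)
    (hb.ne_zero i) (hb.ne_zero j) (hb.inner_eq_zero hij) hi

open scoped Matrix.Norms.L2Operator in
theorem IsHermitian.norm_toEuclideanCLM_eq_norm_eigenvalues (hA : A.IsHermitian) :
    ‖toEuclideanCLM (𝕜 := 𝕜) A‖ = ‖hA.eigenvalues‖ := by
  rw [← cstar_norm_def]
  conv_lhs => rw [hA.spectral_theorem]
  rw [Unitary.conjStarAlgAut_apply,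
    CStarRing.norm_mul_mem_unitary _ (Unitary.star_mem (SetLike.coe_mem _)),
    CStarRing.norm_coe_unitary_mul, l2_opNorm_diagonal]
  simp [Pi.norm_def, Function.comp_def]

end Matrix

/-- Seiringer's identity: for a density matrix `γ` and a rank-one orthogonal projector
`p = |φ⟩⟨φ|`, the trace norm of `p − γ` (the sum of the absolute values of its
eigenvalues) equals twice its operator norm. -/
theorem stmt_1 (n : ℕ) (γ p : Matrix (Fin n) (Fin n) ℂ)
    (hγ : γ.PosSemidef) (htr : γ.trace = 1)
    (φ : Fin n → ℂ) (hφ : ∑ i, Complex.normSq (φ i) = 1)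
    (hp : p = Matrix.of fun i j => φ i * (starRingEnd ℂ) (φ j))
    (hA : (p - γ).IsHermitian) :
    ∑ i, |hA.eigenvalues i| = 2 * ‖Matrix.toEuclideanCLM (𝕜 := ℂ) (p - γ)‖ := by
  have hp' : p = Matrix.vecMulVec φ (star φ) := hp
  have hsum : ∑ i, hA.eigenvalues i = 0 := by
    have htrace : (p - γ).trace = 0 := by
      rw [Matrix.trace_sub, htr, hp', Matrix.trace_vecMulVec, sub_eq_zero]
      simp [dotProduct, Complex.mul_conj, ← Complex.ofReal_sum, hφ]
    apply RCLike.ofReal_injective (K := ℂ)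
    rw [RCLike.ofReal_sum, ← hA.trace_eq_sum_eigenvalues, htrace, RCLike.ofReal_zero]
  have hpos := hA.subsingleton_setOf_eigenvalues_pos (φ := φ) (by rwa [← hp', sub_sub_cancel])
  rw [hA.norm_toEuclideanCLM_eq_norm_eigenvalues]
  exact sum_abs_eq_two_mul_norm_of_sum_eq_zero hsum hpos
end

section
/- In ℂ² let φ = (1,0) and, for 0 ≤ a ≤ 1, let γ be the rank-one projection with matrix [[1−a, √(a−a²)],[√(a−a²), a]]. Then E := 1 − ⟨φ, γφ⟩ = a, tr|γ(1 − p)| = √a where p = |φ⟩⟨φ|, and R := tr|γ − p| ≥ √E / 2. -/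
open ComplexOrder Matrix

/-! For a Hermitian `2 × 2` matrix the eigenvalues are determined by its trace and determinant.
With `s = √(a - a²)`, `γ - p = !![-a, s; s, a]` is traceless with determinant `-a`, so its
eigenvalues are `±√a` and `R = 2√a`; and `(γ (1 - p))ᴴ (γ (1 - p)) = !![0, 0; 0, a]` is singular
with trace `a`, so `tr|γ (1 - p)| = √a`. -/

namespace Matrix.IsHermitian

variable {𝕜 : Type*} [RCLike 𝕜] {A : Matrix (Fin 2) (Fin 2) 𝕜} (hA : A.IsHermitian)

lemma eigenvalues_zero_add_eigenvalues_one :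
    hA.eigenvalues 0 + hA.eigenvalues 1 = RCLike.re A.trace := by
  simp [hA.trace_eq_sum_eigenvalues, Fin.sum_univ_two]

lemma eigenvalues_zero_mul_eigenvalues_one :
    hA.eigenvalues 0 * hA.eigenvalues 1 = RCLike.re A.det := by
  rw [hA.det_eq_prod_eigenvalues, Fin.prod_univ_two, ← RCLike.ofReal_mul, RCLike.ofReal_re]

lemma sum_abs_eigenvalues_of_trace_eq_zero (htr : A.trace = 0) :
    ∑ i, |hA.eigenvalues i| = 2 * √(-RCLike.re A.det) := by
  have hsum := hA.eigenvalues_zero_add_eigenvalues_one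
  rw [htr, map_zero] at hsum
  have h1 : hA.eigenvalues 1 = -hA.eigenvalues 0 := by linarith
  have hsq : -RCLike.re A.det = hA.eigenvalues 0 ^ 2 := by
    rw [← hA.eigenvalues_zero_mul_eigenvalues_one, h1]; ring
  rw [Fin.sum_univ_two, h1, abs_neg, hsq, Real.sqrt_sq_eq_abs]
  ring

lemma sum_sqrt_eigenvalues_of_det_eq_zero (hdet : A.det = 0) :
    ∑ i, √(hA.eigenvalues i) = √(RCLike.re A.trace) := by
  have hprod := hA.eigenvalues_zero_mul_eigenvalues_one
  rw [hdet, map_zero] at hprod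
  rw [Fin.sum_univ_two, ← hA.eigenvalues_zero_add_eigenvalues_one]
  rcases mul_eq_zero.mp hprod with h | h <;> simp [h]

end Matrix.IsHermitian

/-- Sharpness of `R ≤ √(8E)`: in `ℂ²` with `φ = (1,0)` and the rank-one projection
`γ = [[1−a, √(a−a²)],[√(a−a²), a]]` for `0 ≤ a ≤ 1`, one has `E = a`,
`tr|γ(1−p)| = √a` (the trace norm being the sum of the singular values,
i.e. the square roots of the eigenvalues of `Bᴴ B`), and `R = tr|γ − p| ≥ √E / 2`. -/
theorem stmt_6 (a : ℝ) (ha : 0 ≤ a) (ha1 : a ≤ 1) :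
    let φ : Fin 2 → ℂ := ![1, 0]
    let γ : Matrix (Fin 2) (Fin 2) ℂ :=
      !![((1 - a : ℝ) : ℂ), ((Real.sqrt (a - a ^ 2) : ℝ) : ℂ);
         ((Real.sqrt (a - a ^ 2) : ℝ) : ℂ), ((a : ℝ) : ℂ)]
    let p : Matrix (Fin 2) (Fin 2) ℂ := Matrix.of fun i j => φ i * (starRingEnd ℂ) (φ j)
    let B : Matrix (Fin 2) (Fin 2) ℂ := γ * (1 - p)
    ∀ (hA : (γ - p).IsHermitian) (hB : (Bᴴ * B).IsHermitian),
      (1 - (dotProduct (star φ) (γ *ᵥ φ)).re = a)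
      ∧ (∑ i, Real.sqrt (hB.eigenvalues i) = Real.sqrt a)
      ∧ (∑ i, |hA.eigenvalues i|
          ≥ Real.sqrt (1 - (dotProduct (star φ) (γ *ᵥ φ)).re) / 2) := by
  intro φ γ p B hA hB
  set s := √(a - a ^ 2)
  have hs : (s : ℂ) * s = a - a ^ 2 := by
    rw [← Complex.ofReal_mul, Real.mul_self_sqrt (by nlinarith)]; push_cast; ring
  have hE : 1 - (dotProduct (star φ) (γ *ᵥ φ)).re = a := by
    simp [φ, γ, dotProduct, mulVec, Fin.sum_univ_two]
  have hA_eq : γ - p = !![-(a : ℂ), s; s, a] := by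
    ext i j; fin_cases i <;> fin_cases j <;> simp [γ, p, φ] <;> ring
  have hp : 1 - p = !![0, 0; 0, 1] := by
    ext i j; fin_cases i <;> fin_cases j <;> simp [p, φ]
  have hB_eq : B = !![0, (s : ℂ); 0, a] := by
    simp only [B, γ, hp, mul_fin_two]; simp [s]
  have hBB_eq : Bᴴ * B = !![0, 0; 0, (a : ℂ)] := by
    rw [hB_eq]
    ext i j; fin_cases i <;> fin_cases j <;> simp [mul_apply, Fin.sum_univ_two]
    linear_combination hs
  refine ⟨hE, ?_, ?_⟩
  · rw [hB.sum_sqrt_eigenvalues_of_det_eq_zero (by simp [hBB_eq]), hBB_eq]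
    simp
  · have hdet : (γ - p).det = -(a : ℂ) := by
      rw [hA_eq, det_fin_two_of]; linear_combination -hs
    rw [hA.sum_abs_eigenvalues_of_trace_eq_zero (by simp [hA_eq]), hdet, hE]
    simp only [RCLike.re_to_complex, Complex.neg_re, Complex.ofReal_re, neg_neg]
    linarith [Real.sqrt_nonneg a]
end

section
/- Let Ψ ∈ L²_+(ℝ^{Nd}) be a normalized symmetric wave function and f : {0,…,N} → [0,∞). Then ⟨Ψ, f̂ q_1 Ψ⟩ = ⟨Ψ, f̂ m̂ Ψ⟩ and ⟨Ψ, f̂ q_1 q_2 Ψ⟩ ≤ (N/(N−1)) ⟨Ψ, f̂ m̂² Ψ⟩, where m(k) = k/N. -/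
/-!
Write `Π_S` for the tensor product carrying `q = 1 - p` on the particles in `S` and `p` on the
others. The `Π_S` are mutually orthogonal projections, `P_k = ∑_{|S| = k} Π_S`, and
`Π_S q_i = [i ∈ S] Π_S`; so `f̂ q₁`, `f̂ q₁ q₂`, `f̂ m̂`, `f̂ m̂²` are all diagonal in the `Π_S`,
with weights `f(|S|) [1 ∈ S]`, `f(|S|) [1, 2 ∈ S]`, `f(|S|) |S|/N`, `f(|S|) |S|²/N²`.
Symmetry of `Ψ` makes `⟨Ψ, Π_S Ψ⟩` depend on `S` only up to permutations, and double counting the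
pairs `J ⊆ S` with `|J| = r` turns the constraint `{1, …, r} ⊆ S` into the factor
`C(|S|, r) / C(N, r)`: this is `|S|/N` for `r = 1` and `|S|(|S| - 1)/(N(N - 1)) ≤ |S|²/(N(N - 1))`
for `r = 2`, the last step using `⟨Ψ, Π_S Ψ⟩ ≥ 0`.
-/

open Finset Matrix

/-- The lift of a one-particle operator `A` (a `d × d` matrix) to the `i`-th factor of the
`N`-fold tensor power `(ℂ^d)^{⊗N}`, whose kernel indices are `Fin N → Fin d`. -/
def liftOp {d : ℕ} {N : ℕ} (A : Matrix (Fin d) (Fin d) ℂ) (i : Fin N) :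
    Matrix (Fin N → Fin d) (Fin N → Fin d) ℂ :=
  Matrix.of fun x y => if ∀ j : Fin N, j ≠ i → x j = y j then A (x i) (y i) else 0

/-- The occupation-number projection `P_k`. -/
noncomputable def projP (d N : ℕ) (p : Matrix (Fin d) (Fin d) ℂ) (k : ℕ) :
    Matrix (Fin N → Fin d) (Fin N → Fin d) ℂ :=
  ∑ S ∈ Finset.powersetCard k (Finset.univ : Finset (Fin N)),
    (((List.finRange N).map fun i => liftOp (if i ∈ S then 1 - p else p) i).prod)

namespace ManyBody

lemma list_prod_map_mulSingle {ι M : Type*} [DecidableEq ι] [Monoid M] (B : ι → M)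
    {l : List ι} (hl : l.Nodup) :
    (l.map fun i => Pi.mulSingle i (B i)).prod = fun j => if j ∈ l then B j else 1 := by
  induction l with
  | nil => rfl
  | cons a l ih =>
    rw [List.map_cons, List.prod_cons, ih (List.nodup_cons.1 hl).2]
    funext j
    by_cases h : j = a
    · subst h
      simp [(List.nodup_cons.1 hl).1]
    · simp [h]

variable {ι m R : Type*} [Fintype ι]

/-- Double counting of the pairs `J ⊆ S` with `#J = #I`; invariance of `a` makes the sum over the
`S ⊇ J` independent of `J`. -/
theorem choose_card_smul_sum_subset [DecidableEq ι] {M : Type*} [AddCommMonoid M]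
    (a : Finset ι → M) (ha : ∀ (σ : Equiv.Perm ι) S, a (S.map σ.toEmbedding) = a S)
    (I : Finset ι) :
    (Fintype.card ι).choose #I • ∑ S with I ⊆ S, a S = ∑ S, (#S).choose #I • a S := by
  have hJ : ∀ J ∈ powersetCard #I univ, ∑ S with J ⊆ S, a S = ∑ S with I ⊆ S, a S := by
    intro J hJ
    obtain ⟨σ, rfl⟩ := Equiv.Perm.exists_map_finset_eq I J (mem_powersetCard.1 hJ).2.symm
    exact (sum_equiv σ.finsetCongr (by simp) (by simp [ha])).symm
  calc (Fintype.card ι).choose #I • ∑ S with I ⊆ S, a S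
      = ∑ J ∈ powersetCard #I univ, ∑ S with J ⊆ S, a S := by
        rw [sum_congr rfl hJ, sum_const, card_powersetCard, card_univ]
    _ = ∑ S, ∑ _J ∈ powersetCard #I S, a S :=
        sum_comm' fun J S => by simp [mem_powersetCard, and_comm]
    _ = ∑ S, (#S).choose #I • a S := by simp only [sum_const, card_powersetCard]

section PiKron

variable [CommSemiring R]

def piKron (A : ι → Matrix m m R) : Matrix (ι → m) (ι → m) R :=
  of fun x y => ∏ i, A i (x i) (y i)

@[simp]
lemma piKron_apply (A : ι → Matrix m m R) (x y : ι → m) :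
    piKron A x y = ∏ i, A i (x i) (y i) := rfl

lemma piKron_mul [Fintype m] [DecidableEq ι] (A B : ι → Matrix m m R) :
    piKron A * piKron B = piKron (A * B) := by
  ext x y
  simp only [mul_apply, piKron_apply, Pi.mul_apply, prod_univ_sum, Fintype.piFinset_univ,
    prod_mul_distrib]

lemma piKron_one [DecidableEq m] : piKron (1 : ι → Matrix m m R) = 1 := by
  ext x y
  simp [one_apply, prod_boole, funext_iff]

lemma piKron_eq_zero {A : ι → Matrix m m R} (i : ι) (h : A i = 0) : piKron A = 0 := by
  ext x y
  exact prod_eq_zero (mem_univ i) (by simp [h])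

lemma conjTranspose_piKron [StarRing R] (A : ι → Matrix m m R) :
    (piKron A)ᴴ = piKron fun i => (A i)ᴴ := by
  ext x y
  simp [star_prod]

def piKronHom [Fintype m] [DecidableEq ι] [DecidableEq m] :
    (ι → Matrix m m R) →* Matrix (ι → m) (ι → m) R where
  toFun := piKron
  map_one' := piKron_one
  map_mul' A B := (piKron_mul A B).symm

lemma piKron_comp_perm (A : ι → Matrix m m R) (σ : Equiv.Perm ι) :
    piKron (A ∘ σ) = (piKron A).submatrix (σ.arrowCongr (Equiv.refl m))
      (σ.arrowCongr (Equiv.refl m)) := by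
  ext x y
  simp only [piKron_apply, submatrix_apply, Function.comp_apply, Equiv.arrowCongr_apply,
    Equiv.coe_refl]
  exact (Equiv.prod_comp σ.symm _).symm.trans (by simp)

lemma dotProduct_piKron_comp_perm [StarRing R] [DecidableEq ι] [Fintype m]
    {Ψ : (ι → m) → R} (hsym : ∀ σ : Equiv.Perm ι, ∀ x, Ψ (x ∘ σ) = Ψ x)
    (A : ι → Matrix m m R) (σ : Equiv.Perm ι) :
    star Ψ ⬝ᵥ (piKron (A ∘ σ) *ᵥ Ψ) = star Ψ ⬝ᵥ (piKron A *ᵥ Ψ) := by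
  set e := σ.arrowCongr (Equiv.refl m)
  have hΨ : Ψ ∘ e.symm = Ψ := funext (hsym σ)
  rw [piKron_comp_perm, submatrix_mulVec_equiv, hΨ]
  refine Fintype.sum_equiv e _ _ fun x => ?_
  simp only [Pi.star_apply, Function.comp_apply]
  rw [← hsym σ.symm x]
  rfl

end PiKron

section Occupation

variable [CommRing R] [DecidableEq ι] [DecidableEq m]

def occProj (p : Matrix m m R) (S : Finset ι) : Matrix (ι → m) (ι → m) R :=
  piKron fun i => if i ∈ S then 1 - p else p

/-- `f̂` and `m̂` are `occOp p (f ∘ card)` and `occOp p (card / N)` (`sum_range_smul_projP`). -/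
def occOp (p : Matrix m m R) (w : Finset ι → R) : Matrix (ι → m) (ι → m) R :=
  ∑ S, w S • occProj p S

variable [Fintype m] {p : Matrix m m R}

lemma occProj_mul_occProj (hp : IsIdempotentElem p) (S T : Finset ι) :
    occProj p S * occProj p T = if S = T then occProj p S else 0 := by
  rw [occProj, occProj, piKron_mul]
  split_ifs with hST
  · subst hST
    congr 1
    funext i
    simp only [Pi.mul_apply]
    split_ifs
    · exact hp.one_sub.eq
    · exact hp.eq
  · obtain ⟨i, hi⟩ : ∃ i, ¬(i ∈ S ↔ i ∈ T) := by
      by_contra! h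
      exact hST (Finset.ext h)
    refine piKron_eq_zero i ?_
    by_cases hS : i ∈ S <;> by_cases hT : i ∈ T <;>
      simp_all [hp.mul_one_sub_self, hp.one_sub_mul_self]

lemma occProj_mul_piKron_mulSingle (hp : IsIdempotentElem p) (S : Finset ι) (i : ι) :
    occProj p S * piKron (Pi.mulSingle i (1 - p)) = if i ∈ S then occProj p S else 0 := by
  rw [occProj, piKron_mul]
  split_ifs with hi
  · congr 1
    funext j
    by_cases hj : j = i
    · subst hj
      simp [hi, hp.one_sub.eq]
    · simp [hj]
  · exact piKron_eq_zero i (by simp [hi, hp.mul_one_sub_self])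

lemma occOp_mul_occOp (hp : IsIdempotentElem p) (w v : Finset ι → R) :
    occOp p w * occOp p v = occOp p (w * v) := by
  simp only [occOp, sum_mul_sum, smul_mul_smul_comm, occProj_mul_occProj hp, smul_ite,
    smul_zero, sum_ite_eq, mem_univ, if_true, Pi.mul_apply]

lemma occOp_mul_piKron_mulSingle (hp : IsIdempotentElem p) (w : Finset ι → R) (i : ι) :
    occOp p w * piKron (Pi.mulSingle i (1 - p)) = occOp p fun S => if i ∈ S then w S else 0 := by
  simp only [occOp, sum_mul, smul_mul_assoc, occProj_mul_piKron_mulSingle hp, smul_ite,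
    smul_zero, ite_smul, zero_smul]

variable [StarRing R]

lemma occProj_eq_conjTranspose_mul_self (hpH : p.IsHermitian) (hp : IsIdempotentElem p)
    (S : Finset ι) : occProj p S = (occProj p S)ᴴ * occProj p S := by
  have hH : (occProj p S)ᴴ = occProj p S := by
    rw [occProj, conjTranspose_piKron]
    congr 1
    funext i
    split_ifs <;> simp [hpH.eq]
  rw [hH, occProj_mul_occProj hp, if_pos rfl]

lemma dotProduct_occProj_nonneg [PartialOrder R] [StarOrderedRing R] (hpH : p.IsHermitian)
    (hp : IsIdempotentElem p) (Ψ : (ι → m) → R) (S : Finset ι) :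
    0 ≤ star Ψ ⬝ᵥ (occProj p S *ᵥ Ψ) := by
  rw [occProj_eq_conjTranspose_mul_self hpH hp]
  exact (posSemidef_conjTranspose_mul_self _).dotProduct_mulVec_nonneg Ψ

lemma dotProduct_occOp (Ψ : (ι → m) → R) (w : Finset ι → R) :
    star Ψ ⬝ᵥ (occOp p w *ᵥ Ψ) = ∑ S, w S * (star Ψ ⬝ᵥ (occProj p S *ᵥ Ψ)) := by
  simp only [occOp, sum_mulVec, dotProduct_sum, smul_mulVec, dotProduct_smul, smul_eq_mul]

variable {Ψ : (ι → m) → R} (hsym : ∀ σ : Equiv.Perm ι, ∀ x, Ψ (x ∘ σ) = Ψ x)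
include hsym

lemma dotProduct_occProj_map (σ : Equiv.Perm ι) (S : Finset ι) :
    star Ψ ⬝ᵥ (occProj p (S.map σ.toEmbedding) *ᵥ Ψ) = star Ψ ⬝ᵥ (occProj p S *ᵥ Ψ) := by
  rw [occProj, occProj, ← dotProduct_piKron_comp_perm hsym _ σ]
  congr 3
  funext i
  simp

theorem choose_card_smul_dotProduct_occOp_subset (g : ℕ → R) (I : Finset ι) :
    (Fintype.card ι).choose #I •
        (star Ψ ⬝ᵥ (occOp p (fun S => if I ⊆ S then g #S else 0) *ᵥ Ψ))
      = star Ψ ⬝ᵥ (occOp p (fun S => (#S).choose #I • g #S) *ᵥ Ψ) := by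
  simp only [dotProduct_occOp, ite_mul, zero_mul, ← sum_filter, smul_mul_assoc]
  refine choose_card_smul_sum_subset (fun S => g #S * (star Ψ ⬝ᵥ (occProj p S *ᵥ Ψ)))
    (fun σ S => ?_) I
  rw [card_map, dotProduct_occProj_map hsym]

end Occupation

section Density

variable [Field R] [CharZero R] [StarRing R] [DecidableEq ι] [DecidableEq m] [Fintype m]
  {p : Matrix m m R} {Ψ : (ι → m) → R}

theorem dotProduct_occOp_mul_piKron_mulSingle (hp : IsIdempotentElem p)
    (hsym : ∀ σ : Equiv.Perm ι, ∀ x, Ψ (x ∘ σ) = Ψ x) (g : ℕ → R) (i : ι) :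
    star Ψ ⬝ᵥ ((occOp p (fun S => g #S) * piKron (Pi.mulSingle i (1 - p))) *ᵥ Ψ)
      = star Ψ ⬝ᵥ
          ((occOp p (fun S => g #S) * occOp p (fun S => #S / Fintype.card ι)) *ᵥ Ψ) := by
  have hcard : (Fintype.card ι : R) ≠ 0 := by
    exact_mod_cast (Fintype.card_pos_iff.2 ⟨i⟩).ne'
  have h := choose_card_smul_dotProduct_occOp_subset (p := p) hsym g {i}
  simp only [card_singleton, Nat.choose_one_right, singleton_subset_iff, nsmul_eq_mul] at h
  rw [occOp_mul_piKron_mulSingle hp, occOp_mul_occOp hp, ← mul_right_inj' hcard, h]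
  simp only [dotProduct_occOp, mul_sum, Pi.mul_apply]
  exact sum_congr rfl fun S _ => by field_simp

end Density

lemma choose_two_div_choose_two_le {N : ℕ} (hN : 2 ≤ N) (k : ℕ) :
    (k.choose 2 : ℝ) / N.choose 2 ≤ N / (N - 1) * (k / N) ^ 2 := by
  have hN' : (2 : ℝ) ≤ N := by exact_mod_cast hN
  have hN1 : (0 : ℝ) < N - 1 := by linarith
  rw [Nat.cast_choose_two, Nat.cast_choose_two,
    show (N / (N - 1) * (k / N) ^ 2 : ℝ) = k ^ 2 / 2 / (N * (N - 1) / 2) by field_simp]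
  gcongr
  nlinarith

section Complex

open scoped ComplexOrder

variable [DecidableEq ι] [DecidableEq m] [Fintype m] {p : Matrix m m ℂ} {Ψ : (ι → m) → ℂ}

lemma re_dotProduct_occOp_ofReal (w : Finset ι → ℝ) :
    (star Ψ ⬝ᵥ (occOp p (fun S => (w S : ℂ)) *ᵥ Ψ)).re
      = ∑ S, w S * (star Ψ ⬝ᵥ (occProj p S *ᵥ Ψ)).re := by
  simp only [dotProduct_occOp, Complex.re_sum, Complex.re_ofReal_mul]

lemma choose_two_mul_re_dotProduct_occOp_pair
    (hsym : ∀ σ : Equiv.Perm ι, ∀ x, Ψ (x ∘ σ) = Ψ x) (f : ℕ → ℝ) {i j : ι} (hij : i ≠ j) :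
    ((Fintype.card ι).choose 2 : ℝ) *
        (star Ψ ⬝ᵥ (occOp p (fun S => if {i, j} ⊆ S then (f #S : ℂ) else 0) *ᵥ Ψ)).re
      = ∑ S, (#S).choose 2 * f #S * (star Ψ ⬝ᵥ (occProj p S *ᵥ Ψ)).re := by
  have h := choose_card_smul_dotProduct_occOp_subset (p := p) hsym (fun k => (f k : ℂ)) {i, j}
  have hw : (fun S : Finset ι => (#S).choose 2 • (f #S : ℂ))
      = fun S => (((#S).choose 2 * f #S : ℝ) : ℂ) := by
    funext S
    push_cast
    rw [nsmul_eq_mul]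
  rw [card_pair hij, hw, nsmul_eq_mul, ← Complex.ofReal_natCast] at h
  have hre := congrArg Complex.re h
  rwa [Complex.re_ofReal_mul, re_dotProduct_occOp_ofReal] at hre

theorem re_dotProduct_occOp_mul_piKron_mulSingle_mul_le (hpH : p.IsHermitian)
    (hp : IsIdempotentElem p) (hsym : ∀ σ : Equiv.Perm ι, ∀ x, Ψ (x ∘ σ) = Ψ x)
    (f : ℕ → ℝ) (hf : ∀ k, 0 ≤ f k) {i j : ι} (hij : i ≠ j) :
    let N := Fintype.card ι
    let fhat := occOp p fun S => (f #S : ℂ)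
    let mhat := occOp p fun S => (#S : ℂ) / N
    (star Ψ ⬝ᵥ ((fhat * piKron (Pi.mulSingle i (1 - p)) * piKron (Pi.mulSingle j (1 - p)))
        *ᵥ Ψ)).re ≤ N / (N - 1) * (star Ψ ⬝ᵥ ((fhat * mhat * mhat) *ᵥ Ψ)).re := by
  intro N fhat mhat
  have hN : 2 ≤ N := Fintype.one_lt_card_iff.2 ⟨i, j, hij⟩
  have hC : (0 : ℝ) < N.choose 2 := by exact_mod_cast Nat.choose_pos hN
  have hq : fhat * piKron (Pi.mulSingle i (1 - p)) * piKron (Pi.mulSingle j (1 - p))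
      = occOp p fun S => if {i, j} ⊆ S then (f #S : ℂ) else 0 := by
    simp only [fhat, occOp_mul_piKron_mulSingle hp, insert_subset_iff, singleton_subset_iff]
    congr 1
    funext S
    by_cases hi : i ∈ S <;> simp [hi]
  have hm : fhat * mhat * mhat = occOp p fun S => ((f #S * (#S / N) ^ 2 : ℝ) : ℂ) := by
    rw [occOp_mul_occOp hp, occOp_mul_occOp hp]
    congr 1
    funext S
    push_cast
    simp only [Pi.mul_apply]
    ring
  have hpair := choose_two_mul_re_dotProduct_occOp_pair (p := p) hsym f hij
  set r : Finset ι → ℝ := fun S => (star Ψ ⬝ᵥ (occProj p S *ᵥ Ψ)).re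
  have hr : ∀ S, 0 ≤ r S := fun S =>
    (Complex.nonneg_iff.1 (dotProduct_occProj_nonneg hpH hp Ψ S)).1
  rw [hq, hm, re_dotProduct_occOp_ofReal, mul_sum]
  calc (star Ψ ⬝ᵥ (occOp p (fun S => if {i, j} ⊆ S then (f #S : ℂ) else 0) *ᵥ Ψ)).re
      = (∑ S, (#S).choose 2 * f #S * r S) / N.choose 2 := by
        rw [← hpair, mul_div_cancel_left₀ _ hC.ne']
    _ = ∑ S, ((#S).choose 2 / N.choose 2 : ℝ) * (f #S * r S) := by
        rw [sum_div]
        exact sum_congr rfl fun S _ => by ring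
    _ ≤ ∑ S, (N / (N - 1) * (#S / N) ^ 2 : ℝ) * (f #S * r S) :=
        sum_le_sum fun S _ => mul_le_mul_of_nonneg_right (choose_two_div_choose_two_le hN _)
          (mul_nonneg (hf _) (hr S))
    _ = _ := sum_congr rfl fun S _ => by ring

end Complex

end ManyBody

open ManyBody

lemma liftOp_eq_piKron {d N : ℕ} (A : Matrix (Fin d) (Fin d) ℂ) (i : Fin N) :
    liftOp A i = piKron (Pi.mulSingle i A : Fin N → Matrix (Fin d) (Fin d) ℂ) := by
  ext x y
  rw [liftOp, of_apply, piKron_apply, ← mul_prod_erase _ _ (mem_univ i), Pi.mulSingle_eq_same]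
  split_ifs with h
  · rw [prod_eq_one, mul_one]
    intro j hj
    have hji := ne_of_mem_erase hj
    rw [Pi.mulSingle_eq_of_ne hji, one_apply, if_pos (h j hji)]
  · obtain ⟨j, hji, hxy⟩ : ∃ j, j ≠ i ∧ x j ≠ y j := by simpa using h
    rw [prod_eq_zero (mem_erase.2 ⟨hji, mem_univ j⟩), mul_zero]
    rw [Pi.mulSingle_eq_of_ne hji, one_apply, if_neg hxy]

lemma projP_eq_sum_occProj (d N : ℕ) (p : Matrix (Fin d) (Fin d) ℂ) (k : ℕ) :
    projP d N p k = ∑ S ∈ powersetCard k univ, occProj p S := by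
  refine sum_congr rfl fun S _ => ?_
  set B : Fin N → Matrix (Fin d) (Fin d) ℂ := fun i => if i ∈ S then 1 - p else p
  calc ((List.finRange N).map fun i => liftOp (B i) i).prod
      = piKronHom ((List.finRange N).map fun i => Pi.mulSingle i (B i)).prod := by
        simp only [liftOp_eq_piKron, map_list_prod, List.map_map]
        rfl
    _ = occProj p S := by
        rw [list_prod_map_mulSingle _ (List.nodup_finRange N)]
        simp [piKronHom, occProj, B, List.mem_finRange]

lemma sum_range_smul_projP (d N : ℕ) (p : Matrix (Fin d) (Fin d) ℂ) (g : ℕ → ℂ) :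
    ∑ k ∈ range (N + 1), g k • projP d N p k = occOp p fun S => g #S := by
  have hcard : ∀ S ∈ (univ : Finset (Finset (Fin N))), #S ∈ range (N + 1) := fun S _ => by
    simpa [Nat.lt_succ_iff] using card_le_univ S
  rw [occOp, ← sum_fiberwise_of_maps_to hcard]
  refine sum_congr rfl fun k _ => ?_
  rw [projP_eq_sum_occProj, smul_sum, powersetCard_eq_filter, powerset_univ]
  exact sum_congr rfl fun S hS => by rw [(mem_filter.1 hS).2]

/-- For a normalized symmetric wave function `Ψ` and a nonnegative weight
`f : {0,…,N} → [0,∞)`, one has `⟨Ψ, f̂ q₁ Ψ⟩ = ⟨Ψ, f̂ m̂ Ψ⟩` and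
`⟨Ψ, f̂ q₁ q₂ Ψ⟩ ≤ (N/(N−1)) ⟨Ψ, f̂ m̂² Ψ⟩`, where `m(k) = k/N`. -/
theorem stmt_9 (d N : ℕ) (hN : 2 ≤ N) (p : Matrix (Fin d) (Fin d) ℂ)
    (hp : p.IsHermitian) (hidem : p * p = p)
    (Ψ : (Fin N → Fin d) → ℂ)
    (hsym : ∀ σ : Equiv.Perm (Fin N), ∀ x : Fin N → Fin d, Ψ (x ∘ σ) = Ψ x)
    (f : ℕ → ℝ) (hf : ∀ k, 0 ≤ f k) :
    let q : Matrix (Fin d) (Fin d) ℂ := 1 - p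
    let q₁ : Matrix (Fin N → Fin d) (Fin N → Fin d) ℂ := liftOp q ⟨0, by omega⟩
    let q₂ : Matrix (Fin N → Fin d) (Fin N → Fin d) ℂ := liftOp q ⟨1, by omega⟩
    let fhat : Matrix (Fin N → Fin d) (Fin N → Fin d) ℂ :=
      ∑ k ∈ Finset.range (N + 1), ((f k : ℝ) : ℂ) • projP d N p k
    let mhat : Matrix (Fin N → Fin d) (Fin N → Fin d) ℂ :=
      ∑ k ∈ Finset.range (N + 1), ((k : ℂ) / (N : ℂ)) • projP d N p k
    dotProduct (star Ψ) ((fhat * q₁) *ᵥ Ψ)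
        = dotProduct (star Ψ) ((fhat * mhat) *ᵥ Ψ)
    ∧ (dotProduct (star Ψ) ((fhat * q₁ * q₂) *ᵥ Ψ)).re
        ≤ (N : ℝ) / ((N : ℝ) - 1) *
            (dotProduct (star Ψ) ((fhat * mhat * mhat) *ᵥ Ψ)).re := by
  intro q q₁ q₂ fhat mhat
  have hfhat : fhat = occOp p fun S => (f #S : ℂ) := sum_range_smul_projP d N p _
  have hmhat : mhat = occOp p fun S => (#S : ℂ) / Fintype.card (Fin N) := by
    rw [Fintype.card_fin]
    exact sum_range_smul_projP d N p _
  have hq₁ : q₁ = piKron (Pi.mulSingle ⟨0, by omega⟩ (1 - p)) := liftOp_eq_piKron _ _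
  have hq₂ : q₂ = piKron (Pi.mulSingle ⟨1, by omega⟩ (1 - p)) := liftOp_eq_piKron _ _
  refine ⟨?_, ?_⟩
  · rw [hfhat, hmhat, hq₁]
    exact dotProduct_occOp_mul_piKron_mulSingle hidem hsym (fun k => (f k : ℂ)) _
  · have h := re_dotProduct_occOp_mul_piKron_mulSingle_mul_le hp hidem hsym f hf
      (i := ⟨0, by omega⟩) (j := ⟨1, by omega⟩) (by simp)
    rw [Fintype.card_fin] at h hmhat
    rwa [hfhat, hmhat, hq₁, hq₂]
end

section
/- Let r ≥ 1 and A be an operator acting on the first r coordinates of L²(ℝ^{Nd}). Let Q_1, Q_2 be projections, each of the form #_1 ⋯ #_r where each # is either p or q (acting on coordinates 1,…,r), with n_1 and n_2 factors q, respectively. Then for any f : {0,…,N} → ℂ, Q_1 A_{1…r} f̂ Q_2 = Q_1 (τ_n f)^ A_{1…r} Q_2, where n = n_2 − n_1 and (τ_n f)(k) := f(k+n). -/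
open Finset Matrix

namespace Stmt10

variable {d N : ℕ}

/-- pointwise tensor-product operator -/
noncomputable def Pi' (σ : Fin N → Matrix (Fin d) (Fin d) ℂ) :
    Matrix (Fin N → Fin d) (Fin N → Fin d) ℂ :=
  Matrix.of fun x y => ∏ i, σ i (x i) (y i)

lemma prod_liftOp_entry (σ : Fin N → Matrix (Fin d) (Fin d) ℂ) :
    ∀ l : List (Fin N), l.Nodup → ∀ x y : Fin N → Fin d,
      ((l.map fun i => liftOp (σ i) i).prod) x y =
        if ∀ j, j ∉ l → x j = y j then (l.map fun i => σ i (x i) (y i)).prod else 0 := by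
  intro l
  induction l with
  | nil =>
    intro _ x y
    have hc : (∀ j, j ∉ ([] : List (Fin N)) → x j = y j) ↔ x = y := by
      simp [funext_iff]
    rw [List.map_nil, List.prod_nil, List.map_nil, List.prod_nil, Matrix.one_apply,
      if_congr hc rfl rfl]
  | cons i t ih =>
    intro hnd x y
    obtain ⟨hit, hnt⟩ := List.nodup_cons.mp hnd
    rw [List.map_cons, List.prod_cons, Matrix.mul_apply]
    rw [Finset.sum_eq_single (Function.update x i (y i))]
    · rw [ih hnt]
      simp only [liftOp, Matrix.of_apply]
      rw [if_pos (fun j hj => (Function.update_of_ne hj _ _).symm), Function.update_self]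
      have hmap : t.map (fun j => σ j (Function.update x i (y i) j) (y j))
          = t.map (fun j => σ j (x j) (y j)) := by
        apply List.map_congr_left
        intro a ha
        rw [Function.update_of_ne (fun h => hit (by rwa [h] at ha))]
      rw [hmap, mul_ite, mul_zero, List.map_cons, List.prod_cons]
      refine if_congr ?_ rfl rfl
      constructor
      · intro h j hj
        rw [List.mem_cons, not_or] at hj
        obtain ⟨hji, hjt⟩ := hj
        have := h j hjt
        rwa [Function.update_of_ne hji] at this
      · intro h j hj
        rcases eq_or_ne j i with rfl | hji
        · rw [Function.update_self]
        · rw [Function.update_of_ne hji]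
          exact h j (by simp [hji, hj])
    · intro z _ hz
      by_cases h1 : ∀ j : Fin N, j ≠ i → x j = z j
      · rw [ih hnt]
        by_cases h2 : ∀ j, j ∉ t → z j = y j
        · exfalso; apply hz; funext j
          rcases eq_or_ne j i with rfl | hji
          · rw [Function.update_self]; exact h2 j hit
          · rw [Function.update_of_ne hji]; exact (h1 j hji).symm
        · rw [if_neg h2, mul_zero]
      · simp only [liftOp, Matrix.of_apply]
        rw [if_neg h1, zero_mul]
    · intro h; exact absurd (Finset.mem_univ _) h

lemma prod_liftOp_finRange (σ : Fin N → Matrix (Fin d) (Fin d) ℂ) :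
    ((List.finRange N).map fun i => liftOp (σ i) i).prod = Pi' σ := by
  ext x y
  rw [prod_liftOp_entry σ _ (List.nodup_finRange N),
    if_pos (fun j hj => absurd (List.mem_finRange j) hj)]
  rw [Pi', Matrix.of_apply, Fin.prod_univ_def]

lemma Pi'_mul (σ τ : Fin N → Matrix (Fin d) (Fin d) ℂ) :
    Pi' σ * Pi' τ = Pi' (fun i => σ i * τ i) := by
  ext x y
  rw [Matrix.mul_apply]
  simp only [Pi', Matrix.of_apply, Matrix.mul_apply]
  rw [Finset.prod_univ_sum]
  rw [Fintype.piFinset_univ]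
  exact Finset.sum_congr rfl fun z _ => (Finset.prod_mul_distrib).symm

lemma Pi'_eq_zero {σ : Fin N → Matrix (Fin d) (Fin d) ℂ} (i₀ : Fin N) (h : σ i₀ = 0) :
    Pi' σ = 0 := by
  ext x y
  simp only [Pi', Matrix.of_apply, Matrix.zero_apply]
  exact Finset.prod_eq_zero (Finset.mem_univ i₀) (by rw [h]; rfl)


section Proj

variable (r : ℕ) (p : Matrix (Fin d) (Fin d) ℂ)

/-- choice-function projector entries -/
def qc (c : Fin N → Bool) : Fin N → Matrix (Fin d) (Fin d) ℂ :=
  fun j => if (j : ℕ) < r then (if c j then 1 - p else p) else 1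

/-- occupation projector entries -/
def chi (S : Finset (Fin N)) : Fin N → Matrix (Fin d) (Fin d) ℂ :=
  fun i => if i ∈ S then 1 - p else p

/-- high-coordinate projector entries -/
def Rf (T : Finset (Fin N)) : Fin N → Matrix (Fin d) (Fin d) ℂ :=
  fun i => if (i : ℕ) < r then 1 else (if i ∈ T then 1 - p else p)

def Matches (S : Finset (Fin N)) (c : Fin N → Bool) : Prop :=
  ∀ i : Fin N, (i : ℕ) < r → (i ∈ S ↔ c i = true)

variable {r p}

lemma hpq (hidem : p * p = p) : p * (1 - p) = 0 := by
  rw [mul_sub, mul_one, hidem, sub_self]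

lemma hqp (hidem : p * p = p) : (1 - p) * p = 0 := by
  rw [sub_mul, one_mul, hidem, sub_self]

lemma hqq (hidem : p * p = p) : (1 - p) * (1 - p) = 1 - p := by
  rw [sub_mul, one_mul, mul_sub, mul_one, hidem, sub_self, sub_zero]

lemma chi_mul_qc {S : Finset (Fin N)} {c : Fin N → Bool} (hidem : p * p = p)
    (h : Matches r S c) (i : Fin N) :
    chi p S i * qc r p c i
      = Rf r p (S.filter fun j : Fin N => ¬ (j : ℕ) < r) i * qc r p c i := by
  unfold chi qc Rf
  by_cases hi : (i : ℕ) < r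
  · simp only [if_pos hi, one_mul]
    by_cases hc : c i = true
    · rw [if_pos hc, if_pos ((h i hi).mpr hc), hqq hidem]
    · rw [if_neg hc, if_neg (fun hS => hc ((h i hi).mp hS)), hidem]
  · simp only [if_neg hi, mul_one, Finset.mem_filter]
    by_cases hS : i ∈ S
    · rw [if_pos hS, if_pos ⟨hS, hi⟩]
    · rw [if_neg hS, if_neg (fun h' => hS h'.1)]

lemma qc_mul_chi {S : Finset (Fin N)} {c : Fin N → Bool} (hidem : p * p = p)
    (h : Matches r S c) (i : Fin N) :
    qc r p c i * chi p S i
      = qc r p c i * Rf r p (S.filter fun j : Fin N => ¬ (j : ℕ) < r) i := by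
  unfold chi qc Rf
  by_cases hi : (i : ℕ) < r
  · simp only [if_pos hi, mul_one]
    by_cases hc : c i = true
    · rw [if_pos hc, if_pos ((h i hi).mpr hc), hqq hidem]
    · rw [if_neg hc, if_neg (fun hS => hc ((h i hi).mp hS)), hidem]
  · simp only [if_neg hi, one_mul, Finset.mem_filter]
    by_cases hS : i ∈ S
    · rw [if_pos hS, if_pos ⟨hS, hi⟩]
    · rw [if_neg hS, if_neg (fun h' => hS h'.1)]

lemma not_matches_zero {S : Finset (Fin N)} {c : Fin N → Bool} (hidem : p * p = p)
    (h : ¬ Matches r S c) :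
    (∃ i, chi p S i * qc r p c i = 0) ∧ (∃ i, qc r p c i * chi p S i = 0) := by
  unfold Matches at h
  push_neg at h
  obtain ⟨i, hi, hmis⟩ := h
  unfold chi qc
  rcases hmis with ⟨h1, h2⟩ | ⟨h1, h2⟩
  · exact ⟨⟨i, by rw [if_pos h1, if_pos hi, if_neg h2, hqp hidem]⟩,
      ⟨i, by rw [if_pos hi, if_neg h2, if_pos h1, hpq hidem]⟩⟩
  · exact ⟨⟨i, by rw [if_neg h1, if_pos hi, if_pos h2, hpq hidem]⟩,
      ⟨i, by rw [if_pos hi, if_pos h2, if_neg h1, hqp hidem]⟩⟩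

instance instDecMatches (r : ℕ) (S : Finset (Fin N)) (c : Fin N → Bool) :
    Decidable (Matches r S c) :=
  inferInstanceAs (Decidable (∀ i : Fin N, (i : ℕ) < r → (i ∈ S ↔ c i = true)))

end Proj

section Sums

variable {r : ℕ} {p : Matrix (Fin d) (Fin d) ℂ}

lemma card_eq_of_matches {S : Finset (Fin N)} {c : Fin N → Bool} (hm : Matches r S c) :
    S.card = (S.filter fun j : Fin N => ¬ (j : ℕ) < r).card
      + (Finset.univ.filter fun j : Fin N => (j : ℕ) < r ∧ c j = true).card := by
  classical
  have h1 : S.filter (fun j : Fin N => (j : ℕ) < r)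
      = Finset.univ.filter fun j : Fin N => (j : ℕ) < r ∧ c j = true := by
    ext i
    simp only [Finset.mem_filter, Finset.mem_univ, true_and]
    constructor
    · rintro ⟨hiS, hir⟩; exact ⟨hir, (hm i hir).mp hiS⟩
    · rintro ⟨hir, hic⟩; exact ⟨(hm i hir).mpr hic, hir⟩
  rw [← Finset.card_filter_add_card_filter_not (s := S) (p := fun j : Fin N => (j : ℕ) < r),
    h1, add_comm]

lemma sum_powerset_matches (c : Fin N → Bool)
    (F : Finset (Fin N) → Matrix (Fin N → Fin d) (Fin N → Fin d) ℂ) :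
    ∑ S ∈ (Finset.univ : Finset (Fin N)).powerset,
        (if Matches r S c then F (S.filter fun j : Fin N => ¬ (j : ℕ) < r) else 0)
      = ∑ T ∈ (Finset.univ.filter fun j : Fin N => ¬ (j : ℕ) < r).powerset, F T := by
  classical
  rw [← Finset.sum_filter]
  refine Finset.sum_nbij' (fun S => S.filter fun j : Fin N => ¬ (j : ℕ) < r)
    (fun T => T ∪ (Finset.univ.filter fun j : Fin N => (j : ℕ) < r ∧ c j = true))
    ?_ ?_ ?_ ?_ ?_
  · intro S _
    simp only [Finset.mem_powerset]
    intro i hi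
    simp only [Finset.mem_filter] at hi ⊢
    exact ⟨Finset.mem_univ i, hi.2⟩
  · intro T hT
    simp only [Finset.mem_powerset, Finset.mem_filter] at hT
    simp only [Finset.mem_filter, Finset.mem_powerset]
    refine ⟨Finset.subset_univ _, ?_⟩
    intro i hir
    simp only [Finset.mem_union, Finset.mem_filter, Finset.mem_univ, true_and]
    constructor
    · rintro (hiT | ⟨_, hic⟩)
      · exact absurd hir (Finset.mem_filter.mp (hT hiT)).2
      · exact hic
    · intro hic; exact Or.inr ⟨hir, hic⟩
  · intro S hS
    simp only [Finset.mem_filter, Finset.mem_powerset] at hS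
    obtain ⟨-, hm⟩ := hS
    ext i
    simp only [Finset.mem_union, Finset.mem_filter, Finset.mem_univ, true_and]
    by_cases hir : (i : ℕ) < r
    · simp only [hir, not_true_eq_false, and_false, false_or, true_and]
      exact ((hm i hir).symm)
    · simp only [hir, not_false_eq_true, and_true, false_and, or_false]
  · intro T hT
    simp only [Finset.mem_powerset, Finset.mem_filter] at hT
    ext i
    simp only [Finset.mem_filter, Finset.mem_union, Finset.mem_univ, true_and]
    constructor
    · rintro ⟨hiT | ⟨hir, _⟩, hnr⟩
      · exact hiT
      · exact absurd hir hnr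
    · intro hiT; exact ⟨Or.inl hiT, (Finset.mem_filter.mp (hT hiT)).2⟩
  · intro S _; rfl

lemma fhat_mul_Q (hidem : p * p = p) (c : Fin N → Bool) (f : ℕ → ℂ) :
    (∑ k ∈ Finset.range (N + 1), f k • projP d N p k) * Pi' (qc r p c)
      = ∑ T ∈ (Finset.univ.filter fun j : Fin N => ¬ (j : ℕ) < r).powerset,
          f (T.card + (Finset.univ.filter fun j : Fin N => (j : ℕ) < r ∧ c j = true).card)
            • (Pi' (Rf r p T) * Pi' (qc r p c)) := by
  classical
  rw [Finset.sum_mul]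
  have step1 : ∀ k ∈ Finset.range (N + 1),
      (f k • projP d N p k) * Pi' (qc r p c)
        = ∑ S ∈ Finset.powersetCard k (Finset.univ : Finset (Fin N)),
            f S.card • (Pi' (chi p S) * Pi' (qc r p c)) := by
    intro k _
    have hproj : projP d N p k
        = ∑ S ∈ Finset.powersetCard k (Finset.univ : Finset (Fin N)), Pi' (chi p S) :=
      Finset.sum_congr rfl fun S _ => prod_liftOp_finRange _
    rw [smul_mul_assoc, hproj, Finset.sum_mul, Finset.smul_sum]
    refine Finset.sum_congr rfl fun S hS => ?_
    rw [(Finset.mem_powersetCard.mp hS).2]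
  rw [Finset.sum_congr rfl step1]
  have hcard : N + 1 = (Finset.univ : Finset (Fin N)).card + 1 := by simp
  rw [hcard, ← Finset.sum_powerset]
  rw [← sum_powerset_matches c
    (fun T => f (T.card + (Finset.univ.filter fun j : Fin N => (j : ℕ) < r ∧ c j = true).card)
      • (Pi' (Rf r p T) * Pi' (qc r p c)))]
  refine Finset.sum_congr rfl fun S _ => ?_
  by_cases hm : Matches r S c
  · rw [if_pos hm, ← card_eq_of_matches hm]
    congr 1
    rw [Pi'_mul, Pi'_mul]
    exact congrArg Pi' (funext (chi_mul_qc hidem hm))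
  · rw [if_neg hm]
    obtain ⟨i, hz⟩ := (not_matches_zero hidem hm).1
    rw [Pi'_mul, Pi'_eq_zero i hz, smul_zero]

lemma Q_mul_fhat (hidem : p * p = p) (c : Fin N → Bool) (f : ℕ → ℂ) :
    Pi' (qc r p c) * (∑ k ∈ Finset.range (N + 1), f k • projP d N p k)
      = ∑ T ∈ (Finset.univ.filter fun j : Fin N => ¬ (j : ℕ) < r).powerset,
          f (T.card + (Finset.univ.filter fun j : Fin N => (j : ℕ) < r ∧ c j = true).card)
            • (Pi' (qc r p c) * Pi' (Rf r p T)) := by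
  classical
  rw [Finset.mul_sum]
  have step1 : ∀ k ∈ Finset.range (N + 1),
      Pi' (qc r p c) * (f k • projP d N p k)
        = ∑ S ∈ Finset.powersetCard k (Finset.univ : Finset (Fin N)),
            f S.card • (Pi' (qc r p c) * Pi' (chi p S)) := by
    intro k _
    have hproj : projP d N p k
        = ∑ S ∈ Finset.powersetCard k (Finset.univ : Finset (Fin N)), Pi' (chi p S) :=
      Finset.sum_congr rfl fun S _ => prod_liftOp_finRange _
    rw [mul_smul_comm, hproj, Finset.mul_sum, Finset.smul_sum]
    refine Finset.sum_congr rfl fun S hS => ?_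
    rw [(Finset.mem_powersetCard.mp hS).2]
  rw [Finset.sum_congr rfl step1]
  have hcard : N + 1 = (Finset.univ : Finset (Fin N)).card + 1 := by simp
  rw [hcard, ← Finset.sum_powerset]
  rw [← sum_powerset_matches c
    (fun T => f (T.card + (Finset.univ.filter fun j : Fin N => (j : ℕ) < r ∧ c j = true).card)
      • (Pi' (qc r p c) * Pi' (Rf r p T)))]
  refine Finset.sum_congr rfl fun S _ => ?_
  by_cases hm : Matches r S c
  · rw [if_pos hm, ← card_eq_of_matches hm]
    congr 1
    rw [Pi'_mul, Pi'_mul]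
    exact congrArg Pi' (funext (qc_mul_chi hidem hm))
  · rw [if_neg hm]
    obtain ⟨i, hz⟩ := (not_matches_zero hidem hm).2
    rw [Pi'_mul, Pi'_eq_zero i hz, smul_zero]

end Sums

section Comm

variable {r : ℕ} {p : Matrix (Fin d) (Fin d) ℂ}

/-- the high-coordinate scalar kernel -/
noncomputable def G (r : ℕ) (p : Matrix (Fin d) (Fin d) ℂ) (T : Finset (Fin N))
    (u v : Fin N → Fin d) : ℂ :=
  ∏ i ∈ Finset.univ.filter (fun j : Fin N => ¬ (j : ℕ) < r),
    (if i ∈ T then 1 - p else p) (u i) (v i)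

lemma G_congr {T : Finset (Fin N)} {u v u' v' : Fin N → Fin d}
    (hu : ∀ i : Fin N, ¬ (i : ℕ) < r → u i = u' i)
    (hv : ∀ i : Fin N, ¬ (i : ℕ) < r → v i = v' i) :
    G r p T u v = G r p T u' v' := by
  refine Finset.prod_congr rfl fun i hi => ?_
  have hir := (Finset.mem_filter.mp hi).2
  rw [hu i hir, hv i hir]

lemma Rf_entry (T : Finset (Fin N)) (x y : Fin N → Fin d) :
    Pi' (Rf r p T) x y
      = if ∀ i : Fin N, (i : ℕ) < r → x i = y i then G r p T x y else 0 := by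
  simp only [Pi', Matrix.of_apply]
  rw [← Finset.prod_filter_mul_prod_filter_not Finset.univ (fun j : Fin N => (j : ℕ) < r)]
  have hh : ∏ i ∈ Finset.univ.filter (fun j : Fin N => ¬ (j : ℕ) < r),
      Rf r p T i (x i) (y i) = G r p T x y := by
    refine Finset.prod_congr rfl fun i hi => ?_
    unfold Rf
    rw [if_neg (Finset.mem_filter.mp hi).2]
  rw [hh]
  by_cases hl : ∀ i : Fin N, (i : ℕ) < r → x i = y i
  · rw [if_pos hl]
    have h1 : ∏ i ∈ Finset.univ.filter (fun j : Fin N => (j : ℕ) < r),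
        Rf r p T i (x i) (y i) = 1 := by
      refine Finset.prod_eq_one fun i hi => ?_
      have hir := (Finset.mem_filter.mp hi).2
      unfold Rf
      rw [if_pos hir, Matrix.one_apply, if_pos (hl i hir)]
    rw [h1, one_mul]
  · rw [if_neg hl]
    push_neg at hl
    obtain ⟨i, hir, hne⟩ := hl
    rw [Finset.prod_eq_zero (Finset.mem_filter.mpr ⟨Finset.mem_univ i, hir⟩)
      (by unfold Rf; rw [if_pos hir]; exact Matrix.one_apply_ne hne), zero_mul]

lemma A_comm_Rf (A : Matrix (Fin N → Fin d) (Fin N → Fin d) ℂ)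
    (hA0 : ∀ x y : Fin N → Fin d, (∃ j : Fin N, r ≤ (j : ℕ) ∧ x j ≠ y j) → A x y = 0)
    (hA1 : ∀ x y x' y' : Fin N → Fin d,
      (∀ j : Fin N, (j : ℕ) < r → x j = x' j ∧ y j = y' j) →
      (∀ j : Fin N, r ≤ (j : ℕ) → x j = y j) → (∀ j : Fin N, r ≤ (j : ℕ) → x' j = y' j) →
      A x y = A x' y')
    (T : Finset (Fin N)) :
    A * Pi' (Rf r p T) = Pi' (Rf r p T) * A := by
  ext x y
  set z1 : Fin N → Fin d := fun i => if (i : ℕ) < r then y i else x i with hz1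
  set z2 : Fin N → Fin d := fun i => if (i : ℕ) < r then x i else y i with hz2
  have hL : (A * Pi' (Rf r p T)) x y = A x z1 * G r p T x y := by
    rw [Matrix.mul_apply]
    rw [Finset.sum_eq_single z1]
    · rw [Rf_entry, if_pos (fun i hir => by rw [hz1]; simp only [if_pos hir])]
      congr 1
      exact G_congr (fun i hir => by rw [hz1]; simp only [if_neg hir]) (fun _ _ => rfl)
    · intro z _ hz
      by_cases hlow : ∀ i : Fin N, (i : ℕ) < r → z i = y i
      · have hex : ∃ j : Fin N, r ≤ (j : ℕ) ∧ x j ≠ z j := by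
          by_contra hcon
          push_neg at hcon
          apply hz
          funext i
          by_cases hir : (i : ℕ) < r
          · rw [hz1]; simp only [if_pos hir]; exact hlow i hir
          · rw [hz1]; simp only [if_neg hir]; exact (hcon i (not_lt.mp hir)).symm
        rw [hA0 x z hex, zero_mul]
      · rw [Rf_entry, if_neg hlow, mul_zero]
    · intro h; exact absurd (Finset.mem_univ _) h
  have hR : (Pi' (Rf r p T) * A) x y = G r p T x y * A z2 y := by
    rw [Matrix.mul_apply]
    rw [Finset.sum_eq_single z2]
    · rw [Rf_entry, if_pos (fun i hir => by rw [hz2]; simp only [if_pos hir])]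
      congr 1
      exact G_congr (fun _ _ => rfl) (fun i hir => by rw [hz2]; simp only [if_neg hir])
    · intro z _ hz
      by_cases hlow : ∀ i : Fin N, (i : ℕ) < r → x i = z i
      · have hex : ∃ j : Fin N, r ≤ (j : ℕ) ∧ z j ≠ y j := by
          by_contra hcon
          push_neg at hcon
          apply hz
          funext i
          by_cases hir : (i : ℕ) < r
          · rw [hz2]; simp only [if_pos hir]; exact (hlow i hir).symm
          · rw [hz2]; simp only [if_neg hir]; exact hcon i (not_lt.mp hir)
        rw [hA0 z y hex, mul_zero]
      · rw [Rf_entry, if_neg hlow, zero_mul]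
    · intro h; exact absurd (Finset.mem_univ _) h
  rw [hL, hR]
  have hAeq : A x z1 = A z2 y := by
    refine hA1 x z1 z2 y ?_ ?_ ?_
    · intro j hj
      constructor
      · rw [hz2]; simp only [if_pos hj]
      · rw [hz1]; simp only [if_pos hj]
    · intro j hj
      rw [hz1]; simp only [if_neg (not_lt.mpr hj)]
    · intro j hj
      rw [hz2]; simp only [if_neg (not_lt.mpr hj)]
  rw [hAeq, mul_comm]

end Comm

end Stmt10

open Stmt10

/-- Pulling `f̂` through an operator `A` acting on the first `r` coordinates:
if `Q₁, Q₂` are products `#₁ ⋯ #_r` of factors `p`/`q` on the first `r` coordinates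
(given by choice functions `c₁, c₂`, with `n₁, n₂` factors `q` respectively), then
`Q₁ A f̂ Q₂ = Q₁ (τ_n f)^ A Q₂` where `n = n₂ − n₁` and `(τ_n f)(k) = f(k+n)`
(`f` being extended by `0` outside `{0,…,N}`). -/
theorem stmt_10 (d N r : ℕ) (hr : 1 ≤ r) (hrN : r ≤ N)
    (p : Matrix (Fin d) (Fin d) ℂ) (hp : p.IsHermitian) (hidem : p * p = p)
    (A : Matrix (Fin N → Fin d) (Fin N → Fin d) ℂ)
    -- `A` acts only on the first `r` coordinates:
    (hA0 : ∀ x y : Fin N → Fin d, (∃ j : Fin N, r ≤ (j : ℕ) ∧ x j ≠ y j) → A x y = 0)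
    (hA1 : ∀ x y x' y' : Fin N → Fin d,
      (∀ j : Fin N, (j : ℕ) < r → x j = x' j ∧ y j = y' j) →
      (∀ j : Fin N, r ≤ (j : ℕ) → x j = y j) → (∀ j : Fin N, r ≤ (j : ℕ) → x' j = y' j) →
      A x y = A x' y')
    (c₁ c₂ : Fin N → Bool) (f : ℕ → ℂ) :
    let Q : (Fin N → Bool) → Matrix (Fin N → Fin d) (Fin N → Fin d) ℂ := fun c =>
      (((List.finRange N).map fun j : Fin N =>
        liftOp (if (j : ℕ) < r then (if c j then 1 - p else p) else 1) j).prod)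
    let nq : (Fin N → Bool) → ℕ := fun c =>
      (Finset.univ.filter fun j : Fin N => (j : ℕ) < r ∧ c j = true).card
    let fhat : (ℕ → ℂ) → Matrix (Fin N → Fin d) (Fin N → Fin d) ℂ := fun g =>
      ∑ k ∈ Finset.range (N + 1), g k • projP d N p k
    let shift : ℤ → (ℕ → ℂ) → (ℕ → ℂ) := fun m g k =>
      if 0 ≤ (k : ℤ) + m then g ((k : ℤ) + m).toNat else 0
    Q c₁ * A * fhat f * Q c₂
      = Q c₁ * fhat (shift ((nq c₂ : ℤ) - (nq c₁ : ℤ)) f) * A * Q c₂ := by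
  
  intro Q nq fhat shift
  have hQ1 : Q c₁ = Pi' (qc r p c₁) := prod_liftOp_finRange _
  have hQ2 : Q c₂ = Pi' (qc r p c₂) := prod_liftOp_finRange _
  have hfhat : ∀ g : ℕ → ℂ,
      fhat g = ∑ k ∈ Finset.range (N + 1), g k • projP d N p k := fun _ => rfl
  have hnq : ∀ c : Fin N → Bool,
      nq c = (Finset.univ.filter fun j : Fin N => (j : ℕ) < r ∧ c j = true).card :=
    fun _ => rfl
  rw [hQ1, hQ2, hfhat, hfhat]
  rw [mul_assoc (Pi' (qc r p c₁) * A), fhat_mul_Q hidem c₂ f]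
  rw [Q_mul_fhat hidem c₁ (shift ((nq c₂ : ℤ) - (nq c₁ : ℤ)) f)]
  rw [Finset.mul_sum, Finset.sum_mul, Finset.sum_mul]
  refine Finset.sum_congr rfl fun T _ => ?_
  rw [mul_smul_comm, smul_mul_assoc, smul_mul_assoc]
  have hco : shift ((nq c₂ : ℤ) - (nq c₁ : ℤ)) f
      (T.card + (Finset.univ.filter fun j : Fin N => (j : ℕ) < r ∧ c₁ j = true).card)
      = f (T.card + (Finset.univ.filter fun j : Fin N => (j : ℕ) < r ∧ c₂ j = true).card) := by
    show (if 0 ≤ ((T.card + nq c₁ : ℕ) : ℤ) + ((nq c₂ : ℤ) - (nq c₁ : ℤ)) then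
        f (((T.card + nq c₁ : ℕ) : ℤ) + ((nq c₂ : ℤ) - (nq c₁ : ℤ))).toNat else 0)
      = f (T.card + nq c₂)
    have h1 : ((T.card + nq c₁ : ℕ) : ℤ) + ((nq c₂ : ℤ) - (nq c₁ : ℤ))
        = ((T.card + nq c₂ : ℕ) : ℤ) := by push_cast; ring
    rw [h1, if_pos (Int.natCast_nonneg _), Int.toNat_natCast]
  rw [hco]
  congr 1
  have hcomm := A_comm_Rf (r := r) (p := p) A hA0 hA1 T
  rw [← mul_assoc, mul_assoc (Pi' (qc r p c₁)) A (Pi' (Rf r p T)), hcomm, ← mul_assoc]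
end
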